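/- arXiv:math/0306166 — 3 statements merged into one kernel-verified Lean document; each statement's English description precedes it below -/
import Mathlib

section
/- Let P₁,…,Pₘ be additive graph properties and let P = P₁∘⋯∘Pₘ. (i) For every graph G, every (P₁,…,Pₘ)-partition of G in which all m parts are nonempty is a P-decomposition of G with m parts. (ii) If moreover each Pᵢ is induced-hereditary, then every graph G ∈ P with at least m vertices has a (P₁,…,Pₘ)-partition with all m parts nonempty (hence dec_P(G) ≥ m). -/
/-!  Common framework: finite simple graphs on finite subsets of `ℕ`,
graph properties, `(P₁,…,Pₙ)`-partitions, products of properties,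
`P`-decompositions, strict graphs, decomposability numbers, generating
sets, *-joins of copies, and the respecting notions from the paper. -/

/-- A finite simple graph on a finite vertex set of natural numbers. -/
structure NGraph where
  verts : Finset ℕ
  Adj : ℕ → ℕ → Prop
  symm : ∀ a b, Adj a b → Adj b a
  loopless : ∀ a, ¬Adj a a
  mem_of_adj : ∀ a b, Adj a b → a ∈ verts ∧ b ∈ verts

/-- The null graph `K₀` (no vertices). -/
def nullGraph : NGraph where
  verts := ∅
  Adj _ _ := False
  symm _ _ h := h.elim
  loopless _ h := h
  mem_of_adj _ _ h := h.elim

namespace NGraph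

/-- The subgraph of `G` induced by the vertex set `U`. -/
def induce (G : NGraph) (U : Finset ℕ) : NGraph where
  verts := G.verts ∩ U
  Adj a b := G.Adj a b ∧ a ∈ U ∧ b ∈ U
  symm a b h := ⟨G.symm a b h.1, h.2.2, h.2.1⟩
  loopless a h := G.loopless a h.1
  mem_of_adj a b h := ⟨Finset.mem_inter.2 ⟨(G.mem_of_adj a b h.1).1, h.2.1⟩,
    Finset.mem_inter.2 ⟨(G.mem_of_adj a b h.1).2, h.2.2⟩⟩

/-- `φ` is an isomorphism from `G` onto `H`. -/
def IsoVia (G H : NGraph) (φ : ℕ → ℕ) : Prop :=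
  Set.BijOn φ (G.verts : Set ℕ) (H.verts : Set ℕ) ∧
    ∀ a ∈ G.verts, ∀ b ∈ G.verts, (G.Adj a b ↔ H.Adj (φ a) (φ b))

/-- `G` and `H` are isomorphic. -/
def Iso (G H : NGraph) : Prop := ∃ φ, G.IsoVia H φ

/-- `H ≤ G` : `H` is isomorphic to an induced subgraph of `G`. -/
def Le (H G : NGraph) : Prop := ∃ U ⊆ G.verts, H.Iso (G.induce U)

end NGraph

/-- `K` is the disjoint union of the family `C` of graphs. -/
def IsDisjUnion {k : ℕ} (K : NGraph) (C : Fin k → NGraph) : Prop :=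
  (∀ i j, i ≠ j → Disjoint (C i).verts (C j).verts) ∧
  K.verts = Finset.univ.biUnion (fun j => (C j).verts) ∧
  ∀ a b, K.Adj a b ↔ ∃ j, (C j).Adj a b

/-- `kG₀` : the set of graphs that are disjoint unions of `k` copies of `G₀`. -/
def kCopies (k : ℕ) (G₀ : NGraph) : Set NGraph :=
  {K | ∃ C : Fin k → NGraph, (∀ j, (C j).Iso G₀) ∧ IsDisjUnion K C}

/-- The *-join `G₁ * ⋯ * Gₙ` of a family of graphs (with pairwise disjoint
vertex sets): all graphs on the union of the vertex sets inducing each `Gᵢ`,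
so that only edges joining distinct `Gᵢ`'s may be added. -/
def StarJoin {n : ℕ} (Gs : Fin n → NGraph) : Set NGraph :=
  {H | H.verts = Finset.univ.biUnion (fun i => (Gs i).verts) ∧
    ∀ i, ∀ a ∈ (Gs i).verts, ∀ b ∈ (Gs i).verts, (H.Adj a b ↔ (Gs i).Adj a b)}

/-- `G * K₁` : the graphs obtained from `G` by adding one new vertex joined
arbitrarily to `G`. -/
def joinOne (G : NGraph) : Set NGraph :=
  {H | ∃ v, v ∉ G.verts ∧ H.verts = insert v G.verts ∧
    ∀ a ∈ G.verts, ∀ b ∈ G.verts, (H.Adj a b ↔ G.Adj a b)}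

/-- A graph property: a nonempty isomorphism-closed class of graphs (it
contains the null graph, which by convention belongs to every property, and
some graph with at least one vertex). -/
def IsProperty (P : Set NGraph) : Prop :=
  nullGraph ∈ P ∧ (∃ G ∈ P, G.verts.Nonempty) ∧
    ∀ G H, NGraph.Iso G H → G ∈ P → H ∈ P

/-- `P` is induced-hereditary. -/
def IndHer (P : Set NGraph) : Prop := ∀ G H, G ∈ P → NGraph.Le H G → H ∈ P

/-- `P` is additive: closed under disjoint unions. -/
def Additive' (P : Set NGraph) : Prop :=
  ∀ G H K : NGraph, G ∈ P → H ∈ P → IsDisjUnion K ![G, H] → K ∈ P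

/-- An additive induced-hereditary graph property. -/
def IsAIH (P : Set NGraph) : Prop := IsProperty P ∧ IndHer P ∧ Additive' P

/-- A `(P₁,…,Pₙ)`-partition of `G` (parts may be empty). -/
def IsPartitionInto {n : ℕ} (Ps : Fin n → Set NGraph) (G : NGraph)
    (V : Fin n → Finset ℕ) : Prop :=
  (∀ i j, i ≠ j → Disjoint (V i) (V j)) ∧
  Finset.univ.biUnion V = G.verts ∧
  ∀ i, G.induce (V i) ∈ Ps i

/-- The product `P₁ ∘ ⋯ ∘ Pₙ` of properties. -/
def ProdProp {n : ℕ} (Ps : Fin n → Set NGraph) : Set NGraph :=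
  {G | ∃ V : Fin n → Finset ℕ, IsPartitionInto Ps G V}

/-- A `P`-decomposition of `G` with parts `V` : the parts are nonempty and
partition `V(G)`, and for every `k ≥ 1` every graph in
`kG[V₁] * ⋯ * kG[Vₙ]` belongs to `P`. -/
def IsDecomp (P : Set NGraph) (G : NGraph) {n : ℕ} (V : Fin n → Finset ℕ) : Prop :=
  (∀ i, (V i).Nonempty) ∧
  (∀ i j, i ≠ j → Disjoint (V i) (V j)) ∧
  Finset.univ.biUnion V = G.verts ∧
  ∀ k : ℕ, 0 < k → ∀ A : Fin n → NGraph,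
    (∀ i, A i ∈ kCopies k (G.induce (V i))) →
    (∀ i j, i ≠ j → Disjoint (A i).verts (A j).verts) →
    ∀ H ∈ StarJoin A, H ∈ P

/-- `dec_P(G)` : the maximum number of parts of a `P`-decomposition of `G`
(`0` if there is none). -/
noncomputable def decP (P : Set NGraph) (G : NGraph) : ℕ :=
  sSup {n | ∃ V : Fin n → Finset ℕ, IsDecomp P G V}

/-- `G` is `P`-strict : `G ∈ P` but some graph in `G * K₁` is not in `P`. -/
def Strict (P : Set NGraph) (G : NGraph) : Prop :=
  G ∈ P ∧ ∃ H ∈ joinOne G, H ∉ P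

/-- `dec(P) = min { dec_P(G) : G ∈ S(P) }`. -/
noncomputable def decOf (P : Set NGraph) : ℕ :=
  sInf (decP P '' {G | Strict P G})

/-- `dec_P(𝒢) = min { dec_P(G) : G ∈ 𝒢 }`. -/
noncomputable def decSet (P 𝒢 : Set NGraph) : ℕ := sInf (decP P '' 𝒢)

/-- `⟨𝒢⟩` : the induced-hereditary property generated by `𝒢`. -/
def gen (𝒢 : Set NGraph) : Set NGraph := {G | ∃ H ∈ 𝒢, NGraph.Le G H}

/-- `𝒢` is a generating set for `P`. -/
def Generates (𝒢 P : Set NGraph) : Prop := gen 𝒢 = P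

/-- `G` is uniquely `P`-decomposable: it has exactly one `P`-decomposition
(as an unordered partition) with `dec_P(G)` parts. -/
def UniquelyDecomposable (P : Set NGraph) (G : NGraph) : Prop :=
  (∃ V : Fin (decP P G) → Finset ℕ, IsDecomp P G V) ∧
  ∀ V W : Fin (decP P G) → Finset ℕ, IsDecomp P G V → IsDecomp P G W →
    ∃ σ : Equiv.Perm (Fin (decP P G)), ∀ i, W i = V (σ i)

/-- Data exhibiting `Gstar` as a member of `s ⊛ G` : `s` pairwise disjoint
copies of `G` (given by isomorphisms) whose *-join contains `Gstar`. -/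
structure CopyJoin (G : NGraph) (s : ℕ) (Gstar : NGraph) where
  copies : Fin s → NGraph
  maps : Fin s → ℕ → ℕ
  iso : ∀ k, G.IsoVia (copies k) (maps k)
  disj : ∀ k l, k ≠ l → Disjoint (copies k).verts (copies l).verts
  mem : Gstar ∈ StarJoin copies

/-- `Gstar ∈ s ⊛ G` respects `d₀ = (U₁,…,Uₘ)` : every added edge between two
different copies of `G` meets (copies of) two different `Uⱼ`'s, i.e. there is
no edge between the copies of the same `Uⱼ` in two different copies of `G`. -/
def CopyJoin.RespectsJoin {G : NGraph} {s : ℕ} {Gstar : NGraph}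
    (cj : CopyJoin G s Gstar) {m : ℕ} (U : Fin m → Finset ℕ) : Prop :=
  ∀ k l : Fin s, k ≠ l → ∀ j : Fin m, ∀ a ∈ (U j).image (cj.maps k),
    ∀ b ∈ (U j).image (cj.maps l), ¬Gstar.Adj a b

/-- A partition `V` of `Gstar ∈ s ⊛ G` respects `d₀ = (U₁,…,Uₘ)` uniformly:
for each part `Vᵢ` there is a single `Uⱼ` such that in every copy `Gᵏ`,
`Vᵢ ∩ V(Gᵏ)` is contained in the copy of `Uⱼ`. -/
def CopyJoin.RespectsUniformly {G : NGraph} {s : ℕ} {Gstar : NGraph}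
    (cj : CopyJoin G s Gstar) {n m : ℕ}
    (V : Fin n → Finset ℕ) (U : Fin m → Finset ℕ) : Prop :=
  ∀ i, ∃ j, ∀ k, V i ∩ (cj.copies k).verts ⊆ (U j).image (cj.maps k)

/-- An irreducible additive induced-hereditary property: one that is not the
product of two additive induced-hereditary properties. -/
def IrredProp (P : Set NGraph) : Prop :=
  IsAIH P ∧ ¬∃ Q R : Set NGraph, IsAIH Q ∧ IsAIH R ∧ P = ProdProp ![Q, R]

/-!
For (i), a graph in `kG[V₁] * ⋯ * kG[Vₘ]` is partitioned by the vertex sets of the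
`kG[Vᵢ]`: the edges added by the *-join run between different parts, so each part
induces a disjoint union of copies of `G[Vᵢ] ∈ Pᵢ`, which lies in `Pᵢ` by additivity.

For (ii), as long as some part of a `(P₁,…,Pₘ)`-partition of `G` is empty, the
assumption `m ≤ |V(G)|` forces another part to have at least two vertices; moving one
of them into the empty part keeps a `(P₁,…,Pₘ)`-partition, since a one-vertex graph
lies in every induced-hereditary property and shrinking a part keeps it in its
property. Then (i) gives `dec_P(G) ≥ m`.
-/

open Finset

namespace NGraph

theorem iso_of_verts_eq {G H : NGraph} (hv : G.verts = H.verts)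
    (hadj : ∀ a ∈ G.verts, ∀ b ∈ G.verts, (G.Adj a b ↔ H.Adj a b)) : G.Iso H :=
  ⟨id, hv ▸ Set.bijOn_id _, hadj⟩

theorem Iso.symm {G H : NGraph} (h : G.Iso H) : H.Iso G := by
  obtain ⟨φ, hbij, hadj⟩ := h
  have hinv := hbij.invOn_invFunOn
  have hbij' := hbij.symm hinv.symm
  refine ⟨Function.invFunOn φ G.verts, hbij', fun a ha b hb => ?_⟩
  have h := hadj _ (hbij'.mapsTo ha) _ (hbij'.mapsTo hb)
  rwa [hinv.2 ha, hinv.2 hb, Iff.comm] at h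

theorem iso_of_verts_eq_singleton {G H : NGraph} {v w : ℕ} (hG : G.verts = {v})
    (hH : H.verts = {w}) : G.Iso H := by
  refine ⟨fun _ => w, ?_, ?_⟩
  · rw [hG, hH, coe_singleton, coe_singleton]
    exact ⟨fun _ _ => rfl, fun _ hx _ hy _ => hx.trans hy.symm, fun _ hy => ⟨v, rfl, hy.symm⟩⟩
  · intro a _ b hb
    rw [hG, mem_singleton] at *
    subst a b
    exact iff_of_false (G.loopless v) (H.loopless w)

theorem induce_le_induce (G : NGraph) {S T : Finset ℕ} (hST : S ⊆ T) :
    (G.induce S).Le (G.induce T) := by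
  refine ⟨G.verts ∩ S, fun x hx => ?_, iso_of_verts_eq ?_ fun a ha b hb => ?_⟩
  · simp only [induce, mem_inter] at hx ⊢
    exact ⟨hx.1, hST hx.2⟩
  · ext x
    simp only [induce, mem_inter]
    tauto
  · simp only [induce, mem_inter] at ha hb ⊢
    tauto

end NGraph

open NGraph

def unionGraph {k : ℕ} (C : Fin k → NGraph) : NGraph where
  verts := univ.biUnion fun j => (C j).verts
  Adj a b := ∃ j, (C j).Adj a b
  symm a b := fun ⟨j, h⟩ => ⟨j, (C j).symm a b h⟩
  loopless a := fun ⟨j, h⟩ => (C j).loopless a h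
  mem_of_adj a b := fun ⟨j, h⟩ =>
    ⟨mem_biUnion.2 ⟨j, mem_univ _, ((C j).mem_of_adj a b h).1⟩,
     mem_biUnion.2 ⟨j, mem_univ _, ((C j).mem_of_adj a b h).2⟩⟩

theorem IsProperty.mem_of_iso {P : Set NGraph} (hP : IsProperty P) {G H : NGraph}
    (h : G.Iso H) (hG : G ∈ P) : H ∈ P :=
  hP.2.2 G H h hG

theorem isDisjUnion_unionGraph_cons {k : ℕ} (C : Fin (k + 1) → NGraph)
    (hdisj : ∀ i j, i ≠ j → Disjoint (C i).verts (C j).verts) :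
    IsDisjUnion (unionGraph C) ![C 0, unionGraph fun j => C j.succ] := by
  have hdisj₀ : Disjoint (C 0).verts (unionGraph fun j => C j.succ).verts :=
    disjoint_biUnion_right _ _ _ |>.2 fun j _ => hdisj 0 j.succ (Fin.succ_ne_zero j).symm
  refine ⟨?_, ?_, fun a b => ?_⟩
  · intro i j hij
    fin_cases i <;> fin_cases j <;> simp_all [hdisj₀.symm]
  · ext a
    simp [unionGraph, Fin.exists_fin_succ]
  · simp [unionGraph, Fin.exists_fin_succ]

theorem Additive'.unionGraph_mem {P : Set NGraph} (hP : IsProperty P) (hA : Additive' P) :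
    ∀ {k : ℕ} (C : Fin k → NGraph), (∀ i j, i ≠ j → Disjoint (C i).verts (C j).verts) →
      (∀ j, C j ∈ P) → unionGraph C ∈ P
  | 0, C, _, _ =>
    hP.mem_of_iso (iso_of_verts_eq (by simp [nullGraph, unionGraph]) (by simp [nullGraph])) hP.1
  | k + 1, C, hdisj, hmem =>
    hA _ _ _ (hmem 0)
      (hA.unionGraph_mem hP _ (fun i j hij => hdisj _ _ (Fin.succ_injective _ |>.ne hij))
        fun j => hmem _)
      (isDisjUnion_unionGraph_cons C hdisj)

theorem Additive'.mem_of_isDisjUnion {P : Set NGraph} (hP : IsProperty P) (hA : Additive' P)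
    {k : ℕ} {K : NGraph} {C : Fin k → NGraph} (hK : IsDisjUnion K C) (hC : ∀ j, C j ∈ P) :
    K ∈ P :=
  hP.mem_of_iso (iso_of_verts_eq hK.2.1.symm fun a _ b _ => (hK.2.2 a b).symm)
    (hA.unionGraph_mem hP C hK.1 hC)

theorem Additive'.mem_of_mem_kCopies {P : Set NGraph} (hP : IsProperty P) (hA : Additive' P)
    {k : ℕ} {G K : NGraph} (hK : K ∈ kCopies k G) (hG : G ∈ P) : K ∈ P := by
  obtain ⟨C, hCiso, hKC⟩ := hK
  exact hA.mem_of_isDisjUnion hP hKC fun j => hP.mem_of_iso (hCiso j).symm hG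

theorem induce_iso_of_mem_starJoin {n : ℕ} {A : Fin n → NGraph} {H : NGraph}
    (hH : H ∈ StarJoin A) (i : Fin n) : (A i).Iso (H.induce (A i).verts) := by
  have hsub : (A i).verts ⊆ H.verts :=
    hH.1 ▸ subset_biUnion_of_mem (fun i => (A i).verts) (mem_univ i)
  refine iso_of_verts_eq (inter_eq_right.2 hsub).symm fun a ha b hb => ?_
  exact (hH.2 i a ha b hb).symm.trans ⟨fun h => ⟨h, ha, hb⟩, And.left⟩

theorem isDecomp_prodProp_of_isPartitionInto {m : ℕ} {Ps : Fin m → Set NGraph}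
    (hprop : ∀ i, IsProperty (Ps i)) (hadd : ∀ i, Additive' (Ps i)) {G : NGraph}
    {V : Fin m → Finset ℕ} (hV : IsPartitionInto Ps G V) (hne : ∀ i, (V i).Nonempty) :
    IsDecomp (ProdProp Ps) G V := by
  refine ⟨hne, hV.1, hV.2.1, fun k _ A hA hAdisj H hH =>
    ⟨fun i => (A i).verts, hAdisj, hH.1.symm, fun i => ?_⟩⟩
  refine (hprop i).mem_of_iso (induce_iso_of_mem_starJoin hH i) ?_
  exact (hadd i).mem_of_mem_kCopies (hprop i) (hA i) (hV.2.2 i)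

theorem IndHer.induce_mem_of_subset {P : Set NGraph} (hP : IndHer P) {G : NGraph}
    {S T : Finset ℕ} (hST : S ⊆ T) (hT : G.induce T ∈ P) : G.induce S ∈ P :=
  hP _ _ hT (G.induce_le_induce hST)

theorem IndHer.induce_singleton_mem {P : Set NGraph} (hP : IsProperty P) (hH : IndHer P)
    {G : NGraph} {v : ℕ} (hv : v ∈ G.verts) : G.induce {v} ∈ P := by
  obtain ⟨G₀, hG₀, w, hw⟩ := hP.2.1
  exact hH G₀ _ hG₀ ⟨{w}, singleton_subset_iff.2 hw,
    iso_of_verts_eq_singleton (v := v) (w := w) (by simp [induce, hv]) (by simp [induce, hw])⟩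

namespace IsPartitionInto

variable {m : ℕ} {Ps : Fin m → Set NGraph} {G : NGraph} {V : Fin m → Finset ℕ}

theorem sum_card (hV : IsPartitionInto Ps G V) : ∑ i, (V i).card = G.verts.card := by
  rw [← hV.2.1, card_biUnion fun i _ j _ hij => hV.1 i j hij]

theorem exists_two_le_card (hV : IsPartitionInto Ps G V) {i₀ : Fin m} (hi₀ : V i₀ = ∅)
    (hm : m ≤ G.verts.card) : ∃ j, 2 ≤ (V j).card := by
  by_contra! hsmall
  have : G.verts.card ≤ m - 1 := calc
    G.verts.card = ∑ i ∈ univ.erase i₀, (V i).card := by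
      rw [← hV.sum_card, sum_erase _ (by simp [hi₀])]
    _ ≤ ∑ i ∈ univ.erase i₀, 1 := sum_le_sum fun i _ => Nat.le_of_lt_succ (hsmall i)
    _ = m - 1 := by simp [card_erase_of_mem]
  have := i₀.pos
  omega

theorem move_vertex (hprop : ∀ i, IsProperty (Ps i)) (hher : ∀ i, IndHer (Ps i))
    (hV : IsPartitionInto Ps G V) {i₀ : Fin m} (hi₀ : V i₀ = ∅) {v : ℕ} (hv : v ∈ G.verts) :
    IsPartitionInto Ps G fun i => if i = i₀ then {v} else (V i).erase v := by
  refine ⟨fun a b hab => ?_, ?_, fun i => ?_⟩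
  · dsimp only
    split_ifs with ha hb hb
    · exact absurd (ha.trans hb.symm) hab
    · simp
    · simp
    · exact disjoint_of_subset_left (erase_subset _ _)
        (disjoint_of_subset_right (erase_subset _ _) (hV.1 a b hab))
  · rw [← hV.2.1] at hv ⊢
    ext x
    simp only [mem_biUnion, mem_univ, true_and] at hv ⊢
    constructor
    · rintro ⟨i, hi⟩
      split_ifs at hi
      · exact mem_singleton.1 hi ▸ hv
      · exact ⟨i, mem_of_mem_erase hi⟩
    · rintro ⟨i, hi⟩
      by_cases hx : x = v
      · exact ⟨i₀, by simp [hx]⟩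
      · have hi' : i ≠ i₀ := by rintro rfl; simp [hi₀] at hi
        exact ⟨i, by simp [hi', hx, hi]⟩
  · dsimp only
    split_ifs with h
    · exact h ▸ (hher i₀).induce_singleton_mem (hprop i₀) hv
    · exact (hher i).induce_mem_of_subset (erase_subset _ _) (hV.2.2 i)

theorem exists_card_empty_lt (hprop : ∀ i, IsProperty (Ps i)) (hher : ∀ i, IndHer (Ps i))
    (hV : IsPartitionInto Ps G V) {i₀ : Fin m} (hi₀ : V i₀ = ∅) (hm : m ≤ G.verts.card) :
    ∃ W, IsPartitionInto Ps G W ∧ #{i | W i = ∅} < #{i | V i = ∅} := by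
  obtain ⟨j, hj⟩ := hV.exists_two_le_card hi₀ hm
  obtain ⟨v, hv⟩ : (V j).Nonempty := card_pos.1 (by omega)
  have hvG : v ∈ G.verts := hV.2.1 ▸ mem_biUnion.2 ⟨j, mem_univ j, hv⟩
  refine ⟨_, hV.move_vertex hprop hher hi₀ hvG, card_lt_card ?_⟩
  refine (ssubset_iff_of_subset fun i hi => ?_).2 ⟨i₀, by simp [hi₀], by simp⟩
  simp only [mem_filter, mem_univ, true_and] at hi ⊢
  split_ifs at hi with h
  · exact absurd hi (singleton_ne_empty v)
  · by_cases hij : i = j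
    · have := card_erase_of_mem hv
      subst hij
      rw [hi, card_empty] at this
      omega
    · rwa [erase_eq_of_notMem fun hvi => disjoint_left.1 (hV.1 i j hij) hvi hv] at hi

end IsPartitionInto

theorem exists_isPartitionInto_nonempty {m : ℕ} {Ps : Fin m → Set NGraph}
    (hprop : ∀ i, IsProperty (Ps i)) (hher : ∀ i, IndHer (Ps i)) {G : NGraph}
    (hG : G ∈ ProdProp Ps) (hm : m ≤ G.verts.card) :
    ∃ V, IsPartitionInto Ps G V ∧ ∀ i, (V i).Nonempty := by
  obtain ⟨V, hV⟩ := hG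
  induction hn : #{i | V i = ∅} using Nat.strong_induction_on generalizing V with
  | _ n ih =>
    by_cases hne : ∀ i, (V i).Nonempty
    · exact ⟨V, hV, hne⟩
    obtain ⟨i₀, hi₀⟩ := not_forall.1 hne
    obtain ⟨W, hW, hlt⟩ :=
      hV.exists_card_empty_lt hprop hher (not_nonempty_iff_eq_empty.1 hi₀) hm
    exact ih _ (hn ▸ hlt) W hW rfl

theorem IsDecomp.le_card {P : Set NGraph} {G : NGraph} {n : ℕ} {V : Fin n → Finset ℕ}
    (hV : IsDecomp P G V) : n ≤ G.verts.card := calc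
  n = ∑ _i : Fin n, 1 := by simp
  _ ≤ ∑ i, (V i).card := sum_le_sum fun i _ => card_pos.2 (hV.1 i)
  _ = G.verts.card := by rw [← hV.2.2.1, card_biUnion fun i _ j _ hij => hV.2.1 i j hij]

theorem IsDecomp.le_decP {P : Set NGraph} {G : NGraph} {n : ℕ} {V : Fin n → Finset ℕ}
    (hV : IsDecomp P G V) : n ≤ decP P G :=
  le_csSup ⟨G.verts.card, fun _ ⟨_, hW⟩ => hW.le_card⟩ ⟨V, hV⟩

theorem statement0 (m : ℕ) (Ps : Fin m → Set NGraph)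
    (hprop : ∀ i, IsProperty (Ps i)) (hadd : ∀ i, Additive' (Ps i)) :
    (∀ (G : NGraph) (V : Fin m → Finset ℕ),
      IsPartitionInto Ps G V → (∀ i, (V i).Nonempty) → IsDecomp (ProdProp Ps) G V) ∧
    ((∀ i, IndHer (Ps i)) →
      ∀ G ∈ ProdProp Ps, m ≤ G.verts.card →
        (∃ V : Fin m → Finset ℕ, IsPartitionInto Ps G V ∧ ∀ i, (V i).Nonempty) ∧
        m ≤ decP (ProdProp Ps) G) := by
  refine ⟨fun G V hV hne => isDecomp_prodProp_of_isPartitionInto hprop hadd hV hne,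
    fun hher G hG hm => ?_⟩
  obtain ⟨V, hV, hne⟩ := exists_isPartitionInto_nonempty hprop hher hG hm
  exact ⟨⟨V, hV, hne⟩, (isDecomp_prodProp_of_isPartitionInto hprop hadd hV hne).le_decP⟩
end

section
/- Let 𝒢 be a generating set for the additive induced-hereditary graph property P, and let H be an arbitrary graph in P. Then 𝒢[H] := {G ∈ 𝒢 : H ≤ G} is also a generating set for P. -/
/-!
Every `G ∈ P` lies in `⟨𝒢[H]⟩`: by additivity the disjoint union of `G` with a copy of `H`
on fresh vertices is in `P = ⟨𝒢⟩`, so it is an induced subgraph of some `G' ∈ 𝒢`; this `G'`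
contains both `H` and `G`, hence `G' ∈ 𝒢[H]` and `G ≤ G'`.
-/

namespace NGraph

def IsEmbedding (G H : NGraph) (φ : ℕ → ℕ) : Prop :=
  Set.InjOn φ G.verts ∧ Set.MapsTo φ G.verts H.verts ∧
    ∀ a ∈ G.verts, ∀ b ∈ G.verts, (G.Adj a b ↔ H.Adj (φ a) (φ b))

theorem IsEmbedding.comp {G H K : NGraph} {φ ψ : ℕ → ℕ} (hψ : H.IsEmbedding K ψ)
    (hφ : G.IsEmbedding H φ) : G.IsEmbedding K (ψ ∘ φ) :=
  ⟨hψ.1.comp hφ.1 hφ.2.1, hψ.2.1.comp hφ.2.1, fun a ha b hb =>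
    (hφ.2.2 a ha b hb).trans (hψ.2.2 _ (hφ.2.1 ha) _ (hφ.2.1 hb))⟩

theorem IsoVia.isEmbedding {G H : NGraph} {φ : ℕ → ℕ} (h : G.IsoVia H φ) :
    G.IsEmbedding H φ :=
  ⟨h.1.injOn, h.1.mapsTo, h.2⟩

theorem le_iff_exists_isEmbedding {G H : NGraph} : G.Le H ↔ ∃ φ, G.IsEmbedding H φ := by
  constructor
  · rintro ⟨U, -, φ, hbij, hadj⟩
    have hmem : ∀ a ∈ G.verts, φ a ∈ H.verts ∧ φ a ∈ U := fun a ha =>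
      Finset.mem_inter.1 (hbij.mapsTo ha)
    refine ⟨φ, hbij.injOn, fun a ha => (hmem a ha).1, fun a ha b hb => ?_⟩
    rw [hadj a ha b hb]
    exact and_iff_left_of_imp fun _ => ⟨(hmem a ha).2, (hmem b hb).2⟩
  · rintro ⟨φ, hinj, hmaps, hadj⟩
    have hverts : ((H.induce (G.verts.image φ)).verts : Set ℕ) = φ '' G.verts := by
      rw [induce, Finset.coe_inter, Finset.coe_image, Set.inter_eq_right]
      exact hmaps.image_subset
    refine ⟨G.verts.image φ, fun x hx => ?_, φ, hverts ▸ hinj.bijOn_image, fun a ha b hb => ?_⟩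
    · obtain ⟨a, ha, rfl⟩ := Finset.mem_image.1 hx
      exact hmaps ha
    · simp only [induce, hadj a ha b hb, Finset.mem_image_of_mem φ ha,
        Finset.mem_image_of_mem φ hb, and_true]

theorem Le.trans {G H K : NGraph} (h₁ : G.Le H) (h₂ : H.Le K) : G.Le K := by
  obtain ⟨φ, hφ⟩ := le_iff_exists_isEmbedding.1 h₁
  obtain ⟨ψ, hψ⟩ := le_iff_exists_isEmbedding.1 h₂
  exact le_iff_exists_isEmbedding.2 ⟨ψ ∘ φ, hψ.comp hφ⟩

theorem Iso.le {G H : NGraph} (h : G.Iso H) : G.Le H :=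
  let ⟨φ, hφ⟩ := h
  le_iff_exists_isEmbedding.2 ⟨φ, hφ.isEmbedding⟩

def map (G : NGraph) (f : ℕ ↪ ℕ) : NGraph where
  verts := G.verts.map f
  Adj a b := ∃ a' b', G.Adj a' b' ∧ f a' = a ∧ f b' = b
  symm a b := by
    rintro ⟨a', b', h, rfl, rfl⟩
    exact ⟨b', a', G.symm _ _ h, rfl, rfl⟩
  loopless a := by
    rintro ⟨a', b', h, rfl, hb⟩
    exact G.loopless a' (f.injective hb ▸ h)
  mem_of_adj a b := by
    rintro ⟨a', b', h, rfl, rfl⟩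
    exact ⟨Finset.mem_map_of_mem f (G.mem_of_adj _ _ h).1,
      Finset.mem_map_of_mem f (G.mem_of_adj _ _ h).2⟩

theorem isoVia_map (G : NGraph) (f : ℕ ↪ ℕ) : G.IsoVia (G.map f) f := by
  refine ⟨?_, fun a _ b _ => ⟨fun h => ⟨a, b, h, rfl, rfl⟩, ?_⟩⟩
  · rw [map, Finset.coe_map]
    exact f.injective.injOn.bijOn_image
  · rintro ⟨a', b', h, ha, hb⟩
    rwa [f.injective ha, f.injective hb] at h

theorem exists_iso_disjoint (G : NGraph) (S : Finset ℕ) :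
    ∃ G', G.Iso G' ∧ Disjoint S G'.verts := by
  refine ⟨G.map (addRightEmbedding (S.sup id + 1)), ⟨_, G.isoVia_map _⟩, ?_⟩
  refine Finset.disjoint_right.2 fun x hx hxS => ?_
  obtain ⟨a, -, rfl⟩ := Finset.mem_map.1 hx
  have : a + (S.sup id + 1) ≤ S.sup id := Finset.le_sup (f := id) hxS
  omega

def union (G H : NGraph) : NGraph where
  verts := G.verts ∪ H.verts
  Adj a b := G.Adj a b ∨ H.Adj a b
  symm a b h := h.imp (G.symm a b) (H.symm a b)
  loopless a h := h.elim (G.loopless a) (H.loopless a)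
  mem_of_adj _ _ h := h.elim
    (fun h => ⟨Finset.mem_union_left _ (G.mem_of_adj _ _ h).1,
      Finset.mem_union_left _ (G.mem_of_adj _ _ h).2⟩)
    (fun h => ⟨Finset.mem_union_right _ (H.mem_of_adj _ _ h).1,
      Finset.mem_union_right _ (H.mem_of_adj _ _ h).2⟩)

theorem isDisjUnion_union {G H : NGraph} (hd : Disjoint G.verts H.verts) :
    IsDisjUnion (G.union H) ![G, H] := by
  refine ⟨fun i j hij => ?_, ?_, fun _ _ => ?_⟩
  · fin_cases i <;> fin_cases j
    all_goals first | exact absurd rfl hij | simpa using hd | simpa using hd.symm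
  · ext x
    simp [union, Fin.exists_fin_two]
  · simp [union, Fin.exists_fin_two]

theorem union_comm (G H : NGraph) : G.union H = H.union G := by
  simp only [union, Finset.union_comm, or_comm]

theorem le_union_left {G H : NGraph} (hd : Disjoint G.verts H.verts) : G.Le (G.union H) := by
  refine le_iff_exists_isEmbedding.2 ⟨id, Set.injOn_id _,
    fun a ha => Finset.mem_union_left _ ha, fun a ha b hb => ⟨Or.inl, ?_⟩⟩
  rintro (h | h)
  · exact h
  · exact absurd (H.mem_of_adj _ _ h).1 (Finset.disjoint_left.1 hd ha)

theorem le_union_right {G H : NGraph} (hd : Disjoint G.verts H.verts) : H.Le (G.union H) :=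
  union_comm H G ▸ le_union_left hd.symm

end NGraph

theorem statement5 (P : Set NGraph) (hP : IsAIH P)
    (𝒢 : Set NGraph) (hgen : Generates 𝒢 P) (H : NGraph) (hH : H ∈ P) :
    Generates {G ∈ 𝒢 | NGraph.Le H G} P := by
  obtain ⟨⟨-, -, hiso⟩, -, hadd⟩ := hP
  refine Set.ext fun G => ⟨fun ⟨G', hG', hle⟩ => hgen ▸ ⟨G', hG'.1, hle⟩, fun hG => ?_⟩
  obtain ⟨H', hHH', hd⟩ := H.exists_iso_disjoint G.verts
  have hunion : G.union H' ∈ gen 𝒢 :=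
    hgen ▸ hadd G H' _ hG (hiso H H' hHH' hH) (NGraph.isDisjUnion_union hd)
  obtain ⟨G', hG', hle⟩ := hunion
  exact ⟨G', ⟨hG', (hHH'.le.trans (NGraph.le_union_right hd)).trans hle⟩,
    (NGraph.le_union_left hd).trans hle⟩
end

section
/- Let P be an additive induced-hereditary graph property that is not the class of all graphs, write n := dec(P), and let G, H ∈ S⇓(P) with G an induced subgraph of H (V(G) ⊆ V(H)). If (G₁,…,Gₙ) and (H₁,…,Hₙ) are the ind-parts of G and H respectively, then the Hᵢ can be relabelled so that V(Hᵢ) ∩ V(G) = V(Gᵢ) for every i; in particular each ind-part of G is an induced subgraph of a distinct ind-part of H. -/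
/-!
The parts of a `P`-decomposition `(W₁,…,Wₙ)` of `H` cut `V(G)` into a `P`-decomposition
`(W₁ ∩ V(G),…,Wₙ ∩ V(G))` of `G`; uniqueness of the decomposition of `G` with `dec(P)` parts
then gives the claim. The traces inherit the decomposition property because disjoint copies of
the `G[Wᵢ ∩ V(G)]` extend to disjoint copies of the `H[Wᵢ]`, so every graph in the *-join of
the former is an induced subgraph of one in the *-join of the latter. The traces are nonempty
because `G` is `P`-strict: if `Wᵢ` missed `V(G)`, a fresh copy of `H[Wᵢ]` would supply a vertex
that may be joined to `G` arbitrarily inside a member of `H[W₁] * ⋯ * H[Wₙ]`, putting all of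
`G * K₁` into `P`.
-/

open Finset NGraph

namespace NGraph

/-- `X` is an induced subgraph of `Y` itself, not only up to isomorphism as in `NGraph.Le`. -/
def InducedSub (X Y : NGraph) : Prop :=
  X.verts ⊆ Y.verts ∧ ∀ a ∈ X.verts, ∀ b ∈ X.verts, (Y.Adj a b ↔ X.Adj a b)

def AgreesWith (X : NGraph) {n : ℕ} (A : Fin n → NGraph) : Prop :=
  ∀ i, ∀ a ∈ X.verts, ∀ b ∈ X.verts, a ∈ (A i).verts → b ∈ (A i).verts →
    (X.Adj a b ↔ (A i).Adj a b)

-- `a ≠ b` keeps the image loopless when `f` is not injective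
def mapGraph (B : NGraph) (f : ℕ → ℕ) : NGraph where
  verts := B.verts.image f
  Adj a b := ∃ x y, B.Adj x y ∧ a = f x ∧ b = f y ∧ a ≠ b
  symm a b := by
    rintro ⟨x, y, h, rfl, rfl, hne⟩
    exact ⟨y, x, B.symm _ _ h, rfl, rfl, hne.symm⟩
  loopless a := by rintro ⟨x, y, h, rfl, e, hne⟩; exact hne rfl
  mem_of_adj a b := by
    rintro ⟨x, y, h, rfl, rfl, -⟩
    obtain ⟨hx, hy⟩ := B.mem_of_adj _ _ h
    exact ⟨mem_image_of_mem f hx, mem_image_of_mem f hy⟩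

def sup (X Y : NGraph) : NGraph where
  verts := X.verts ∪ Y.verts
  Adj a b := X.Adj a b ∨ Y.Adj a b
  symm a b := Or.imp (X.symm a b) (Y.symm a b)
  loopless a h := h.elim (X.loopless a) (Y.loopless a)
  mem_of_adj a b := by
    rintro (h | h)
    · exact (X.mem_of_adj a b h).imp (mem_union_left _) (mem_union_left _)
    · exact (Y.mem_of_adj a b h).imp (mem_union_right _) (mem_union_right _)

lemma ne_of_adj {B : NGraph} {a b : ℕ} (h : B.Adj a b) : a ≠ b := by
  rintro rfl; exact B.loopless a h

lemma induce_verts_of_subset {G : NGraph} {U : Finset ℕ} (h : U ⊆ G.verts) :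
    (G.induce U).verts = U :=
  inter_eq_right.mpr h

lemma isoVia_id (G : NGraph) : G.IsoVia G id :=
  ⟨Set.bijOn_id _, fun _ _ _ _ => Iff.rfl⟩

lemma isoVia_mapGraph (B : NGraph) {f : ℕ → ℕ} (hf : Set.InjOn f B.verts) :
    B.IsoVia (B.mapGraph f) f := by
  refine ⟨by simpa [mapGraph] using hf.bijOn_image, fun a ha b hb => ⟨?_, ?_⟩⟩
  · exact fun h => ⟨a, b, h, rfl, rfl, fun e => ne_of_adj h (hf ha hb e)⟩
  · rintro ⟨x, y, h, ex, ey, -⟩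
    obtain ⟨hx, hy⟩ := B.mem_of_adj _ _ h
    rwa [hf ha hx ex, hf hb hy ey]

lemma IsoVia.iso_symm {G H : NGraph} {φ : ℕ → ℕ} (h : G.IsoVia H φ) : H.Iso G := by
  obtain ⟨hbij, hadj⟩ := h
  have hinv := hbij.invOn_invFunOn
  have hbij' := hbij.symm hinv.symm
  refine ⟨Function.invFunOn φ G.verts, hbij', fun a ha b hb => ?_⟩
  have := hadj _ (hbij'.mapsTo ha) _ (hbij'.mapsTo hb)
  rwa [hinv.2 ha, hinv.2 hb, Iff.comm] at this

lemma Iso.verts_nonempty {G H : NGraph} (h : G.Iso H) (hH : H.verts.Nonempty) :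
    G.verts.Nonempty := by
  obtain ⟨φ, hφ⟩ := h
  obtain ⟨w, hw⟩ := hH
  obtain ⟨v, hv, -⟩ := hφ.1.surjOn (mem_coe.2 hw)
  exact ⟨v, hv⟩

lemma IsoVia.le {Z X Y : NGraph} {f : ℕ → ℕ} (hf : Z.IsoVia X f) (hXY : X.InducedSub Y) :
    Z.Le Y := by
  refine ⟨X.verts, hXY.1, f, ?_, fun a ha b hb => ?_⟩
  · rw [induce_verts_of_subset hXY.1]; exact hf.1
  · have hfa := hf.1.mapsTo ha
    have hfb := hf.1.mapsTo hb
    simp only [mem_coe] at hfa hfb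
    simp only [induce, hfa, hfb, and_true, hXY.2 _ hfa _ hfb]
    exact hf.2 a ha b hb

lemma InducedSub.induce_inter {X Y : NGraph} (h : X.InducedSub Y) (U : Finset ℕ) :
    (X.induce (U ∩ X.verts)).InducedSub (Y.induce U) := by
  refine ⟨fun a ha => ?_, fun a ha b hb => ?_⟩
  · simp only [induce, mem_inter] at ha ⊢
    exact ⟨h.1 ha.1, ha.2.1⟩
  · simp only [induce, mem_inter] at ha hb ⊢
    rw [h.2 a ha.1 b hb.1]
    tauto

end NGraph

def unionFam {k : ℕ} (C : Fin k → NGraph) : NGraph where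
  verts := univ.biUnion fun j => (C j).verts
  Adj a b := ∃ j, (C j).Adj a b
  symm a b := by rintro ⟨j, h⟩; exact ⟨j, (C j).symm _ _ h⟩
  loopless a := by rintro ⟨j, h⟩; exact (C j).loopless a h
  mem_of_adj a b := by
    rintro ⟨j, h⟩
    obtain ⟨ha, hb⟩ := (C j).mem_of_adj _ _ h
    exact ⟨mem_biUnion.2 ⟨j, mem_univ _, ha⟩, mem_biUnion.2 ⟨j, mem_univ _, hb⟩⟩

@[simp]
lemma mem_unionFam_verts {k : ℕ} {C : Fin k → NGraph} {a : ℕ} :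
    a ∈ (unionFam C).verts ↔ ∃ j, a ∈ (C j).verts := by
  simp [unionFam]

section Curried

variable {n k : ℕ} (C : Fin n × Fin k → NGraph)

abbrev rowUnion (i : Fin n) : NGraph := unionFam fun j => C (i, j)

variable {C}

lemma rowUnion_mem_kCopies {S : Fin n → NGraph} (hiso : ∀ t, (C t).Iso (S t.1))
    (hdisj : Pairwise fun t t' => Disjoint (C t).verts (C t').verts) (i : Fin n) :
    rowUnion C i ∈ kCopies k (S i) :=
  ⟨fun j => C (i, j), fun j => hiso (i, j),
    fun _ _ hjj => hdisj (by simpa using hjj), rfl, fun _ _ => Iff.rfl⟩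

lemma rowUnion_disjoint (hdisj : Pairwise fun t t' => Disjoint (C t).verts (C t').verts)
    {i i' : Fin n} (hii : i ≠ i') : Disjoint (rowUnion C i).verts (rowUnion C i').verts := by
  simp only [rowUnion, unionFam, disjoint_biUnion_left, disjoint_biUnion_right]
  exact fun j _ j' _ => hdisj (by simp [hii])

end Curried

lemma exists_starJoin_inducedSub {n : ℕ} {A : Fin n → NGraph} {X : NGraph}
    (hdisj : ∀ i j, i ≠ j → Disjoint (A i).verts (A j).verts)
    (hcov : X.verts ⊆ univ.biUnion fun i => (A i).verts)
    (hcompat : X.AgreesWith A) :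
    ∃ Y ∈ StarJoin A, X.InducedSub Y := by
  have hverts : ((unionFam A).sup X).verts = univ.biUnion fun i => (A i).verts :=
    union_eq_left.2 hcov
  have hpart : ∀ i j a b, a ∈ (A i).verts → (A j).Adj a b → j = i := fun i j a _ ha h => by
    by_contra hji
    exact disjoint_left.1 (hdisj j i hji) ((A j).mem_of_adj _ _ h).1 ha
  refine ⟨(unionFam A).sup X, ⟨hverts, fun i a ha b hb => ⟨?_, fun h => Or.inl ⟨i, h⟩⟩⟩,
    hverts ▸ hcov, fun a ha b hb => ⟨?_, Or.inr⟩⟩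
  · rintro (⟨j, h⟩ | h)
    · rwa [← hpart i j a b ha h]
    · obtain ⟨ha', hb'⟩ := X.mem_of_adj _ _ h
      exact (hcompat i a ha' b hb' ha hb).1 h
  · rintro (⟨j, h⟩ | h)
    · obtain ⟨ha', hb'⟩ := (A j).mem_of_adj _ _ h
      exact (hcompat j a ha b hb ha' hb').2 h
    · exact h

lemma IsDecomp.mem_of_isoVia_of_agreesWith {P : Set NGraph} (hP : IndHer P) {H : NGraph} {n : ℕ}
    {W : Fin n → Finset ℕ} (hW : IsDecomp P H W) {k : ℕ} (hk : 0 < k) {A : Fin n → NGraph}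
    (hA : ∀ i, A i ∈ kCopies k (H.induce (W i)))
    (hdisj : ∀ i j, i ≠ j → Disjoint (A i).verts (A j).verts) {X : NGraph}
    (hcov : X.verts ⊆ univ.biUnion fun i => (A i).verts)
    (hcompat : X.AgreesWith A)
    {Z : NGraph} {f : ℕ → ℕ} (hZ : Z.IsoVia X f) : Z ∈ P := by
  obtain ⟨Y, hY, hXY⟩ := exists_starJoin_inducedSub hdisj hcov hcompat
  exact hP Y Z (hW.2.2.2 k hk A hA hdisj Y hY) (hZ.le hXY)

lemma add_mul_inj_of_lt {N x y c d : ℕ} (hx : x < N) (hy : y < N) (h : x + N * c = y + N * d) :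
    x = y ∧ c = d := by
  have hN : 0 < N := by omega
  have hmod := congrArg (· % N) h
  have hdiv := congrArg (· / N) h
  simp only [Nat.add_mul_mod_self_left, Nat.mod_eq_of_lt hx, Nat.mod_eq_of_lt hy] at hmod
  simp only [Nat.add_mul_div_left _ _ hN, Nat.div_eq_of_lt hx, Nat.div_eq_of_lt hy] at hdiv
  omega

namespace NGraph

variable {B S C : NGraph} {ψ g : ℕ → ℕ}

lemma mem_mapGraph_piecewise (hψ : B.IsoVia C ψ) {a : ℕ} (hBS : B.verts ⊆ S.verts) :
    a ∈ (S.mapGraph (B.verts.piecewise ψ g)).verts ↔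
      a ∈ C.verts ∨ ∃ x ∈ S.verts, x ∉ B.verts ∧ g x = a := by
  simp only [mapGraph, mem_image]
  constructor
  · rintro ⟨x, hx, rfl⟩
    by_cases hxB : x ∈ B.verts
    · left
      rw [piecewise_eq_of_mem _ _ _ hxB]
      exact hψ.1.mapsTo hxB
    · exact Or.inr ⟨x, hx, hxB, (piecewise_eq_of_notMem _ _ _ hxB).symm⟩
  · rintro (ha | ⟨x, hx, hxB, rfl⟩)
    · obtain ⟨x, hx, rfl⟩ := hψ.1.surjOn ha
      exact ⟨x, hBS hx, piecewise_eq_of_mem _ _ _ hx⟩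
    · exact ⟨x, hx, piecewise_eq_of_notMem _ _ _ hxB⟩

lemma isoVia_mapGraph_piecewise (hψ : B.IsoVia C ψ)
    (hg : Set.InjOn g ↑(S.verts \ B.verts)) (hfresh : ∀ x ∈ S.verts \ B.verts, g x ∉ C.verts) :
    S.IsoVia (S.mapGraph (B.verts.piecewise ψ g)) (B.verts.piecewise ψ g) := by
  refine isoVia_mapGraph S fun x hx y hy e => ?_
  by_cases hxB : x ∈ B.verts <;> by_cases hyB : y ∈ B.verts <;>
    simp only [piecewise_eq_of_mem, piecewise_eq_of_notMem, hxB, hyB,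
      not_false_eq_true] at e
  · exact hψ.1.injOn hxB hyB e
  · exact absurd (e ▸ hψ.1.mapsTo hxB) (hfresh y (mem_sdiff.2 ⟨hy, hyB⟩))
  · exact absurd (e ▸ hψ.1.mapsTo hyB) (hfresh x (mem_sdiff.2 ⟨hx, hxB⟩))
  · exact hg (by simp [hx, hxB]) (by simp [hy, hyB]) e

lemma inducedSub_mapGraph_piecewise (hBS : B.InducedSub S) (hψ : B.IsoVia C ψ)
    (hg : Set.InjOn g ↑(S.verts \ B.verts)) (hfresh : ∀ x ∈ S.verts \ B.verts, g x ∉ C.verts) :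
    C.InducedSub (S.mapGraph (B.verts.piecewise ψ g)) := by
  have hiso := isoVia_mapGraph_piecewise hψ hg hfresh
  refine ⟨fun a ha => (mem_mapGraph_piecewise hψ hBS.1).2 (Or.inl ha), fun a ha b hb => ?_⟩
  obtain ⟨x, hx, rfl⟩ := hψ.1.surjOn ha
  obtain ⟨y, hy, rfl⟩ := hψ.1.surjOn hb
  have := hiso.2 x (hBS.1 hx) y (hBS.1 hy)
  simp only [piecewise_eq_of_mem _ _ _ hx, piecewise_eq_of_mem _ _ _ hy] at this
  rw [← this, hBS.2 x hx y hy, hψ.2 x hx y hy]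

end NGraph

lemma exists_disjoint_extensions {ι : Type*} [Fintype ι] {B S C : ι → NGraph}
    {ψ : ι → ℕ → ℕ} (hBS : ∀ t, (B t).InducedSub (S t)) (hψ : ∀ t, (B t).IsoVia (C t) (ψ t))
    (hdisj : Pairwise fun t t' => Disjoint (C t).verts (C t').verts) (F : Finset ℕ) :
    ∃ C' : ι → NGraph, (∀ t, (C' t).Iso (S t)) ∧ (∀ t, (C t).InducedSub (C' t)) ∧
      (Pairwise fun t t' => Disjoint (C' t).verts (C' t').verts) ∧
      ∀ t, ∀ a ∈ (C' t).verts, a ∈ F → a ∈ (C t).verts := by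
  classical
  set e := Fintype.equivFin ι
  set N := (F ∪ univ.biUnion fun t => (S t).verts ∪ (C t).verts).sup id + 1
  have hN : ∀ a ∈ F ∪ univ.biUnion (fun t => (S t).verts ∪ (C t).verts), a < N :=
    fun a ha => Nat.lt_succ_of_le (le_sup (f := id) ha)
  have hFN : ∀ a ∈ F, a < N := fun a ha => hN a (mem_union_left _ ha)
  have hSN : ∀ t, ∀ a ∈ (S t).verts, a < N := fun t a ha =>
    hN a (mem_union_right _ (mem_biUnion.2 ⟨t, mem_univ _, mem_union_left _ ha⟩))
  have hCN : ∀ t, ∀ a ∈ (C t).verts, a < N := fun t a ha =>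
    hN a (mem_union_right _ (mem_biUnion.2 ⟨t, mem_univ _, mem_union_right _ ha⟩))
  -- the new vertices of the `t`-th copy live in the block `[N (1 + e t), N (2 + e t))`
  set g : ι → ℕ → ℕ := fun t x => x + N * (1 + e t)
  have hgN : ∀ t x, N ≤ g t x := fun t x =>
    le_add_left (Nat.le_mul_of_pos_right N (by omega))
  have hg_inj : ∀ t, Set.InjOn (g t) ↑((S t).verts \ (B t).verts) := fun t x hx y hy e =>
    (add_mul_inj_of_lt (hSN t x (mem_sdiff.1 hx).1) (hSN t y (mem_sdiff.1 hy).1) e).1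
  have hfresh : ∀ t, ∀ x ∈ (S t).verts \ (B t).verts, g t x ∉ (C t).verts := fun t x _ hx =>
    absurd (hCN t _ hx) (not_lt.2 (hgN t x))
  have hmem := fun t a => mem_mapGraph_piecewise (g := g t) (hψ t) (hBS t).1 (a := a)
  refine ⟨fun t => (S t).mapGraph ((B t).verts.piecewise (ψ t) (g t)),
    fun t => (isoVia_mapGraph_piecewise (hψ t) (hg_inj t) (hfresh t)).iso_symm,
    fun t => inducedSub_mapGraph_piecewise (hBS t) (hψ t) (hg_inj t) (hfresh t),
    fun t t' htt => disjoint_left.2 fun a ha ha' => ?_, fun t a ha haF => ?_⟩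
  · rcases (hmem t a).1 ha with hC | ⟨x, hx, -, rfl⟩ <;>
      rcases (hmem t' _).1 ha' with hC' | ⟨y, hy, -, hxy⟩
    · exact disjoint_left.1 (hdisj htt) hC hC'
    · exact absurd (hCN t _ hC) (not_lt.2 (hxy ▸ hgN t' y))
    · exact absurd (hCN t' _ hC') (not_lt.2 (hgN t x))
    · have := (add_mul_inj_of_lt (hSN t' y hy) (hSN t x hx) hxy).2
      exact htt (e.injective (Fin.ext (by omega))).symm
  · rcases (hmem t a).1 ha with hC | ⟨x, -, -, rfl⟩
    · exact hC
    · exact absurd (hFN _ haF) (not_lt.2 (hgN t x))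

lemma IsDecomp.subset_verts {P : Set NGraph} {G : NGraph} {n : ℕ} {V : Fin n → Finset ℕ}
    (hV : IsDecomp P G V) (i : Fin n) : V i ⊆ G.verts :=
  hV.2.2.1 ▸ subset_biUnion_of_mem V (mem_univ i)

lemma IsDisjUnion.subset {k : ℕ} {K : NGraph} {C : Fin k → NGraph} (h : IsDisjUnion K C)
    (j : Fin k) : (C j).verts ⊆ K.verts :=
  h.2.1 ▸ subset_biUnion_of_mem (fun j => (C j).verts) (mem_univ j)

lemma IsDecomp.restrict {P : Set NGraph} (hP : IndHer P) {G H : NGraph}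
    (hGH : G.InducedSub H) {n : ℕ} {W : Fin n → Finset ℕ} (hW : IsDecomp P H W)
    (hne : ∀ i, (W i ∩ G.verts).Nonempty) : IsDecomp P G fun i => W i ∩ G.verts := by
  refine ⟨hne, fun i j hij => (hW.2.1 i j hij).mono inter_subset_left inter_subset_left,
    ?_, fun k hk A hA hAdisj X hX => ?_⟩
  · rw [← biUnion_inter, hW.2.2.1, inter_eq_right.2 hGH.1]
  choose C hCiso hCunion using hA
  choose ψ hψ using fun t : Fin n × Fin k => (hCiso t.1 t.2).choose_spec.iso_symm
  have hCdisj : Pairwise fun t t' : Fin n × Fin k =>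
      Disjoint (C t.1 t.2).verts (C t'.1 t'.2).verts := by
    rintro ⟨i, j⟩ ⟨i', j'⟩ htt
    rcases eq_or_ne i i' with rfl | hii
    · exact (hCunion i).1 j j' (by simpa using htt)
    · exact (hAdisj i i' hii).mono ((hCunion i).subset j) ((hCunion i').subset j')
  obtain ⟨C', hC'iso, hCC', hC'disj, hC'X⟩ := exists_disjoint_extensions
    (S := fun t => H.induce (W t.1)) (fun t => hGH.induce_inter (W t.1)) hψ hCdisj X.verts
  refine hW.mem_of_isoVia_of_agreesWith hP hk (rowUnion_mem_kCopies hC'iso hC'disj)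
    (fun i j hij => rowUnion_disjoint hC'disj hij) (fun a ha => ?_)
    (fun i a ha b hb ha' hb' => ?_) (isoVia_id X)
  · obtain ⟨i, -, hai⟩ := mem_biUnion.1 (hX.1 ▸ ha)
    rw [(hCunion i).2.1] at hai
    obtain ⟨j, -, haj⟩ := mem_biUnion.1 hai
    exact mem_biUnion.2 ⟨i, mem_univ _, mem_unionFam_verts.2 ⟨j, (hCC' (i, j)).1 haj⟩⟩
  · obtain ⟨j, haj⟩ := mem_unionFam_verts.1 ha'
    obtain ⟨j', hbj⟩ := mem_unionFam_verts.1 hb'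
    rw [hX.2 i a ((hCunion i).subset j (hC'X _ a haj ha)) b
      ((hCunion i).subset j' (hC'X _ b hbj hb)), (hCunion i).2.2]
    refine exists_congr fun j => ⟨fun h => ?_, fun h => ?_⟩
    · obtain ⟨haC, hbC⟩ := (C i j).mem_of_adj a b h
      exact ((hCC' (i, j)).2 a haC b hbC).2 h
    · obtain ⟨haC, hbC⟩ := (C' (i, j)).mem_of_adj a b h
      exact ((hCC' (i, j)).2 a (hC'X _ a haC ha) b (hC'X _ b hbC hb)).1 h

lemma exists_isoVia_of_mem_joinOne {G Gs : NGraph} (hGs : Gs ∈ joinOne G) {v' : ℕ}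
    (hv' : v' ∉ G.verts) :
    ∃ X f, Gs.IsoVia X f ∧ X.verts = insert v' G.verts ∧
      ∀ a ∈ G.verts, ∀ b ∈ G.verts, (X.Adj a b ↔ G.Adj a b) := by
  classical
  obtain ⟨v, hv, hverts, hadj⟩ := hGs
  set f := Function.update id v v'
  have hfv : f v = v' := Function.update_self ..
  have hfG : ∀ a ∈ G.verts, f a = a := fun a ha =>
    Function.update_of_ne (ne_of_mem_of_not_mem ha hv) _ _
  have hf : Set.InjOn f Gs.verts := by
    intro a ha b hb e
    simp only [hverts, coe_insert, Set.mem_insert_iff, mem_coe] at ha hb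
    rcases ha with rfl | ha <;> rcases hb with rfl | hb
    · rfl
    · rw [hfG b hb, hfv] at e; exact absurd (e ▸ hb) hv'
    · rw [hfG a ha, hfv] at e; exact absurd (e ▸ ha) hv'
    · rwa [hfG a ha, hfG b hb] at e
  refine ⟨Gs.mapGraph f, f, isoVia_mapGraph Gs hf, ?_, fun a ha b hb => ?_⟩
  · simp only [mapGraph, hverts, image_insert, hfv]
    rw [image_congr (g := id) hfG, image_id]
  · have := (isoVia_mapGraph Gs hf).2 a (hverts ▸ mem_insert_of_mem ha) b
      (hverts ▸ mem_insert_of_mem hb)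
    rw [hfG a ha, hfG b hb] at this
    rw [← this, hadj a ha b hb]

lemma NGraph.AgreesWith.of_joinOne {n : ℕ} {A : Fin n → NGraph}
    (hdisj : ∀ i j, i ≠ j → Disjoint (A i).verts (A j).verts) {G X : NGraph}
    (hG : G.AgreesWith A) {v' : ℕ} (hXverts : X.verts = insert v' G.verts)
    (hXadj : ∀ a ∈ G.verts, ∀ b ∈ G.verts, (X.Adj a b ↔ G.Adj a b)) {i₀ : Fin n}
    (hv' : v' ∈ (A i₀).verts) (hGi₀ : Disjoint G.verts (A i₀).verts) : X.AgreesWith A := by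
  have hX : ∀ c ∈ X.verts, c ∉ G.verts → c = v' := fun c hc hcG => by
    simpa [hXverts, hcG] using hc
  have hv'i : ∀ i, v' ∈ (A i).verts → i = i₀ := fun i hi => by
    by_contra hii
    exact disjoint_left.1 (hdisj i i₀ hii) hi hv'
  intro i a ha b hb ha' hb'
  by_cases haG : a ∈ G.verts <;> by_cases hbG : b ∈ G.verts
  · rw [hXadj a haG b hbG]
    exact hG i a haG b hbG ha' hb'
  · obtain rfl := hX b hb hbG
    obtain rfl := hv'i i hb'
    exact absurd ha' (disjoint_left.1 hGi₀ haG)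
  · obtain rfl := hX a ha haG
    obtain rfl := hv'i i ha'
    exact absurd hb' (disjoint_left.1 hGi₀ hbG)
  · obtain rfl := hX a ha haG
    obtain rfl := hX b hb hbG
    exact iff_of_false (X.loopless _) ((A i).loopless _)

lemma IsDecomp.inter_nonempty_of_strict {P : Set NGraph} (hP : IndHer P) {G H : NGraph}
    (hG : Strict P G) (hGH : G.InducedSub H) {n : ℕ} {W : Fin n → Finset ℕ}
    (hW : IsDecomp P H W) (i₀ : Fin n) : (W i₀ ∩ G.verts).Nonempty := by
  by_contra hempty
  rw [not_nonempty_iff_eq_empty] at hempty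
  obtain ⟨-, Gs, hGs, hGsP⟩ := hG
  set B : Fin n × Fin 1 → NGraph := fun t => G.induce (W t.1 ∩ G.verts)
  have hBW : ∀ t, (B t).verts ⊆ W t.1 ∩ G.verts := fun t => inter_subset_right
  have hBdisj : Pairwise fun t t' => Disjoint (B t).verts (B t').verts := fun t t' htt =>
    have hii : t.1 ≠ t'.1 := fun h => htt (Prod.ext h (Subsingleton.elim _ _))
    ((hW.2.1 _ _ hii).mono inter_subset_left inter_subset_left).mono (hBW t) (hBW t')
  obtain ⟨C', hC'iso, hBC', hC'disj, hC'G⟩ := exists_disjoint_extensions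
    (S := fun t => H.induce (W t.1)) (fun t => hGH.induce_inter (W t.1))
    (fun t => isoVia_id (B t)) hBdisj G.verts
  have hrow : ∀ i, ∀ c ∈ (rowUnion C' i).verts, c ∈ G.verts → c ∈ (B (i, 0)).verts :=
    fun i c hc hcG => by
      obtain ⟨j, hcj⟩ := mem_unionFam_verts.1 hc
      exact Subsingleton.elim j 0 ▸ hC'G (i, j) c hcj hcG
  have hB₀ : (B (i₀, 0)).verts = ∅ := by simp [B, induce, hempty]
  have hGagree : G.AgreesWith (rowUnion C') := fun i a ha b hb ha' hb' => by
    have ha0 := hrow i a ha' ha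
    have hb0 := hrow i b hb' hb
    rw [show (rowUnion C' i).Adj a b ↔ ∃ j, (C' (i, j)).Adj a b from Iff.rfl,
      Fin.exists_fin_one, (hBC' (i, 0)).2 a ha0 b hb0]
    exact ⟨fun h => ⟨h, hBW _ ha0, hBW _ hb0⟩, And.left⟩
  obtain ⟨v', hv'⟩ := (hC'iso (i₀, 0)).verts_nonempty <| by
    rw [induce_verts_of_subset (hW.subset_verts i₀)]
    exact hW.1 i₀
  have hv'G : v' ∉ G.verts := fun h => by simpa [hB₀] using hC'G _ v' hv' h
  obtain ⟨X, f, hf, hXverts, hXadj⟩ := exists_isoVia_of_mem_joinOne hGs hv'G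
  have hv'row : v' ∈ (rowUnion C' i₀).verts := mem_unionFam_verts.2 ⟨0, hv'⟩
  have hGi₀ : Disjoint G.verts (rowUnion C' i₀).verts :=
    disjoint_left.2 fun a haG ha => by simpa [hB₀] using hrow i₀ a ha haG
  refine hGsP (hW.mem_of_isoVia_of_agreesWith hP one_pos (rowUnion_mem_kCopies hC'iso hC'disj)
    (fun i j hij => rowUnion_disjoint hC'disj hij) (fun a ha => ?_)
    (hGagree.of_joinOne (fun i j hij => rowUnion_disjoint hC'disj hij) hXverts hXadj
      hv'row hGi₀) hf)
  rw [hXverts] at ha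
  rcases mem_insert.1 ha with rfl | haG
  · exact mem_biUnion.2 ⟨i₀, mem_univ _, hv'row⟩
  · obtain ⟨i, -, hai⟩ := mem_biUnion.1 (hW.2.2.1 ▸ hGH.1 haG)
    exact mem_biUnion.2 ⟨i, mem_univ _, mem_unionFam_verts.2
      ⟨0, (hBC' (i, 0)).1 (mem_inter.2 ⟨haG, mem_inter.2 ⟨hai, haG⟩⟩)⟩⟩

lemma UniquelyDecomposable.exists_perm {P : Set NGraph} {G : NGraph}
    (h : UniquelyDecomposable P G) {n : ℕ} (hn : decP P G = n) {V W : Fin n → Finset ℕ}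
    (hV : IsDecomp P G V) (hW : IsDecomp P G W) : ∃ σ : Equiv.Perm (Fin n), ∀ i, W (σ i) = V i := by
  subst hn
  obtain ⟨σ, hσ⟩ := h.2 V W hV hW
  exact ⟨σ.symm, fun i => by rw [hσ, Equiv.apply_symm_apply]⟩

theorem statement13_general (P : Set NGraph) (hP : IsAIH P)
    (G H : NGraph)
    (hGstrict : Strict P G) (hGuniq : UniquelyDecomposable P G)
    (hGdec : decP P G = decOf P)
    (hsub : G.verts ⊆ H.verts)
    (hind : ∀ a ∈ G.verts, ∀ b ∈ G.verts, (H.Adj a b ↔ G.Adj a b))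
    (V : Fin (decOf P) → Finset ℕ) (hV : IsDecomp P G V)
    (W : Fin (decOf P) → Finset ℕ) (hW : IsDecomp P H W) :
    ∃ σ : Equiv.Perm (Fin (decOf P)), ∀ i, W (σ i) ∩ G.verts = V i := by
  have hGH : G.InducedSub H := ⟨hsub, hind⟩
  have htraces : IsDecomp P G fun i => W i ∩ G.verts :=
    hW.restrict hP.2.1 hGH (hW.inter_nonempty_of_strict hP.2.1 hGstrict hGH)
  exact hGuniq.exists_perm hGdec hV htraces

theorem statement13 (P : Set NGraph) (hP : IsAIH P) (hne : P ≠ Set.univ)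
    (G H : NGraph)
    (hGstrict : Strict P G) (hGuniq : UniquelyDecomposable P G)
    (hGdec : decP P G = decOf P)
    (hHstrict : Strict P H) (hHuniq : UniquelyDecomposable P H)
    (hHdec : decP P H = decOf P)
    (hsub : G.verts ⊆ H.verts)
    (hind : ∀ a ∈ G.verts, ∀ b ∈ G.verts, (H.Adj a b ↔ G.Adj a b))
    (V : Fin (decOf P) → Finset ℕ) (hV : IsDecomp P G V)
    (W : Fin (decOf P) → Finset ℕ) (hW : IsDecomp P H W) :
    ∃ σ : Equiv.Perm (Fin (decOf P)), ∀ i, W (σ i) ∩ G.verts = V i :=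
  statement13_general P hP G H hGstrict hGuniq hGdec hsub hind V hV W hW
end
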